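/- Define the spider state S(n, α) = |0⟩^{⊗n} + e^{iα}|1⟩^{⊗n} ∈ (ℂ²)^{⊗n}. Fix p ≥ 2, integers m₁, …, m_p ≥ 0, angles α₁, …, α_p ∈ ℝ and k ∈ {0,1}. Applying the n-ary X-fusion (GHZ-analyser) success effect E^{(p)}_k = (1/√2)(⟨0|^{⊗p} + (−1)^k ⟨1|^{⊗p}) to one designated qubit of each of the states S(m₁+1, α₁), …, S(m_p+1, α_p) yields (1/√2) · S(m₁ + ⋯ + m_p, α₁ + ⋯ + α_p + kπ). That is, the success case of the p-partite GHZ-state analyser fuses p spiders into a single spider with Pauli-Z byproduct kπ. -/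
import Mathlib


open Complex

/-- The spider state on an arbitrary finite index set `ι`:
`|0⟩^{⊗ι} + e^{iα}|1⟩^{⊗ι}` as an amplitude function on basis states. -/
noncomputable def spiderOn (ι : Type*) [Fintype ι] (α : ℝ) : (ι → Fin 2) → ℂ := fun x =>
  (if ∀ i, x i = 0 then 1 else 0) +
    Complex.exp (α * Complex.I) * (if ∀ i, x i = 1 then 1 else 0)

/-- The `p`-ary X-fusion (GHZ-state analyser) success effect with error bit `k`:
`E^{(p)}_k = (1/√2)(⟨0|^{⊗p} + (−1)^k ⟨1|^{⊗p})`. -/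
noncomputable def ghzAnalyserEffect (p : ℕ) (k : Fin 2) (a : Fin p → Fin 2) : ℂ :=
  ((Real.sqrt 2 : ℂ))⁻¹ *
    ((if ∀ i, a i = 0 then 1 else 0) +
      (-1 : ℂ) ^ (k : ℕ) * (if ∀ i, a i = 1 then 1 else 0))

lemma snoc_forall {n : ℕ} (z : Fin n → Fin 2) (c b : Fin 2) :
    (∀ j : Fin (n+1), (Fin.snoc z c : Fin (n+1) → Fin 2) j = b) ↔ c = b ∧ ∀ j, z j = b := by
  constructor
  · intro h
    exact ⟨by simpa using h (Fin.last n), fun j => by simpa using h j.castSucc⟩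
  · rintro ⟨hc, hz⟩ j
    refine Fin.lastCases ?_ ?_ j
    · simpa using hc
    · intro i; simpa using hz i

/-- The success case of the `p`-partite GHZ-state analyser fuses `p` spiders into a
single spider with Pauli-Z byproduct `kπ`: applying `E^{(p)}_k` to one designated (last)
qubit of each of the states `S(m₁+1, α₁), …, S(m_p+1, α_p)` yields
`(1/√2) · S(m₁+⋯+m_p, α₁+⋯+α_p + kπ)` (the remaining qubits being indexed by the
sigma type `Σ i, Fin (m i)`). -/
theorem ghz_analyser_fuses_spiders (p : ℕ) (hp : 2 ≤ p) (m : Fin p → ℕ) (α : Fin p → ℝ)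
    (k : Fin 2) :
    ∀ z : (i : Fin p) → Fin (m i) → Fin 2,
      (∑ a : Fin p → Fin 2, ghzAnalyserEffect p k a *
          ∏ i : Fin p, spiderOn (Fin (m i + 1)) (α i) (Fin.snoc (z i) (a i))) =
        ((Real.sqrt 2 : ℂ))⁻¹ *
          spiderOn ((i : Fin p) × Fin (m i)) (∑ i, α i + (k : ℕ) * Real.pi)
            (fun q => z q.1 q.2) := by
  intro z
  have key : ∀ (c : Fin 2) (f : (Fin p → Fin 2) → ℂ),
      (∑ a : Fin p → Fin 2, (if ∀ i, a i = c then (1:ℂ) else 0) * f a) = f (fun _ => c) := by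
    intro c f
    rw [Finset.sum_eq_single (fun _ => c)]
    · simp
    · intro a _ ha
      rw [if_neg, zero_mul]
      exact fun h => ha (funext h)
    · simp
  have expand : (∑ a : Fin p → Fin 2, ghzAnalyserEffect p k a *
          ∏ i : Fin p, spiderOn (Fin (m i + 1)) (α i) (Fin.snoc (z i) (a i))) =
      ((Real.sqrt 2 : ℂ))⁻¹ *
        ((∏ i : Fin p, spiderOn (Fin (m i + 1)) (α i) (Fin.snoc (z i) 0)) +
         (-1 : ℂ) ^ (k : ℕ) *
           (∏ i : Fin p, spiderOn (Fin (m i + 1)) (α i) (Fin.snoc (z i) 1))) := by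
    simp only [ghzAnalyserEffect, add_mul, mul_assoc, mul_add, Finset.sum_add_distrib,
      ← Finset.mul_sum]
    rw [key 0, key 1 (fun a => (∏ i : Fin p, spiderOn (Fin (m i + 1)) (α i) (Fin.snoc (z i) (a i))))]
  rw [expand]
  have P0 : (∏ i : Fin p, spiderOn (Fin (m i + 1)) (α i) (Fin.snoc (z i) 0)) =
      (if ∀ q : (i : Fin p) × Fin (m i), z q.1 q.2 = 0 then (1:ℂ) else 0) := by
    have : ∀ i : Fin p, spiderOn (Fin (m i + 1)) (α i) (Fin.snoc (z i) 0) =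
        (if ∀ j, z i j = 0 then (1:ℂ) else 0) := by
      intro i
      simp [spiderOn, snoc_forall, show (0:Fin 2) ≠ 1 by decide]
    rw [Finset.prod_congr rfl (fun i _ => this i), Finset.prod_boole]
    simp [Sigma.forall]
  have P1 : (∏ i : Fin p, spiderOn (Fin (m i + 1)) (α i) (Fin.snoc (z i) 1)) =
      Complex.exp ((∑ i, α i : ℝ) * Complex.I) *
        (if ∀ q : (i : Fin p) × Fin (m i), z q.1 q.2 = 1 then (1:ℂ) else 0) := by
    have : ∀ i : Fin p, spiderOn (Fin (m i + 1)) (α i) (Fin.snoc (z i) 1) =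
        Complex.exp ((α i : ℝ) * Complex.I) * (if ∀ j, z i j = 1 then (1:ℂ) else 0) := by
      intro i
      simp [spiderOn, snoc_forall, show (1:Fin 2) ≠ 0 by decide]
    rw [Finset.prod_congr rfl (fun i _ => this i), Finset.prod_mul_distrib, Finset.prod_boole]
    rw [← Complex.exp_sum]
    congr 1
    · congr 1
      push_cast
      rw [Finset.sum_mul]
    · simp [Sigma.forall]
  rw [P0, P1, spiderOn]
  have hexp : Complex.exp (((∑ i, α i + (k : ℕ) * Real.pi : ℝ)) * Complex.I) =
      (-1 : ℂ) ^ (k : ℕ) * Complex.exp ((∑ i, α i : ℝ) * Complex.I) := by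
    fin_cases k
    · simp
    · push_cast
      rw [add_mul, Complex.exp_add, one_mul, Complex.exp_pi_mul_I]
      ring
  rw [hexp]
  ring
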